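/- Let 1 → R → F → G → 1 be a presentation of a group G with F a free group on a finite set and R a normal subgroup, and let R̄ = R/[R,R] be the relation module with its ℤ[G]-module structure induced by conjugation. Suppose R̄ decomposes as a ℤ[G]-module into a direct sum ⊕_{i ∈ I} ℤ[G]/ℤ[G](g_i − 1) of cyclic modules, where each summand is the quotient of ℤ[G] by the left ideal generated by g_i − 1 for some g_i ∈ G (this holds in particular for every CA-aspherical presentation). Then R/[R,F] is a free abelian group; in particular it is torsion-free, i.e., the presentation is quasirational. -/

import Mathlib

/-!
`R/[R,F]` is the group of coinvariants `R̄_G = R̄ / ⟨g·m - m⟩` of the relation module: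
the class in `R̄` of a generator `[r, f]` of `[R,F]` is `r̄ - π(f)·r̄`. Coinvariants commute
with direct sums, and the augmentation `ℤ[G] → ℤ` identifies the coinvariants of
`ℤ[G]/ℤ[G](g - 1)` with `ℤ`, since `g - 1` lies in the augmentation ideal.
Hence `R/[R,F] ≅ ⊕_I ℤ`.
-/

open scoped DirectSum
open scoped commutatorElement

variable {X G : Type} [Group G]

/-- The subgroup `[ker π, F]` of the free group `F`. -/
def relComm (π : FreeGroup X →* G) : Subgroup (FreeGroup X) :=
  ⁅π.ker, (⊤ : Subgroup (FreeGroup X))⁆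

instance (π : FreeGroup X →* G) : (relComm π).Normal :=
  Subgroup.commutator_normal _ _

/-- `R/[R,F]`, realized as the image of `R = ker π` in `F/[R,F]`. -/
def relCoinv (π : FreeGroup X →* G) : Subgroup (FreeGroup X ⧸ relComm π) :=
  Subgroup.map (QuotientGroup.mk' (relComm π)) π.ker

theorem comm_of_map {F : Type} [Group F] (N L : Subgroup F) [N.Normal]
    (h : ∀ a ∈ L, ∀ b ∈ L, ⁅a, b⁆ ∈ N)
    (x y : ↥(L.map (QuotientGroup.mk' N))) : x * y = y * x := by
  obtain ⟨x, hx⟩ := x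
  obtain ⟨y, hy⟩ := y
  obtain ⟨a, ha, rfl⟩ := hx
  obtain ⟨b, hb, rfl⟩ := hy
  apply Subtype.ext
  show QuotientGroup.mk' N a * QuotientGroup.mk' N b
      = QuotientGroup.mk' N b * QuotientGroup.mk' N a
  rw [← map_mul, ← map_mul, QuotientGroup.mk'_eq_mk']
  refine ⟨⁅b⁻¹, a⁻¹⁆, h _ (inv_mem hb) _ (inv_mem ha), ?_⟩
  simp only [commutatorElement_def]
  group

/-- `R/[R,F]` is an abelian group. -/
instance (π : FreeGroup X →* G) : CommGroup ↥(relCoinv π) :=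
  { (inferInstance : Group ↥(relCoinv π)) with
    mul_comm := comm_of_map (relComm π) π.ker
      (fun a ha b _ => Subgroup.commutator_mem_commutator ha (Subgroup.mem_top b)) }

/-- Functoriality of abelianization on automorphisms. -/
def abAut {H : Type} [Group H] : MulAut H →* MulAut (Abelianization H) where
  toFun e := e.abelianizationCongr
  map_one' := by
    ext x
    induction x using QuotientGroup.induction_on with
    | _ z => rfl
  map_mul' e₁ e₂ := by
    ext x
    induction x using QuotientGroup.induction_on with
    | _ z => rfl

/-- The action of `F` on the abelianization of `R = ker π`, induced by conjugation. -/
def actF (π : FreeGroup X →* G) : FreeGroup X →* MulAut (Abelianization ↥π.ker) :=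
  abAut.comp MulAut.conjNormal

theorem ker_le_ker_actF (π : FreeGroup X →* G) : π.ker ≤ (actF π).ker := by
  intro f hf
  rw [MonoidHom.mem_ker]
  ext x
  induction x using QuotientGroup.induction_on with
  | _ z =>
    show Abelianization.of (MulAut.conjNormal f z) = Abelianization.of z
    have hz : MulAut.conjNormal f z = ⟨f, hf⟩ * z * ⟨f, hf⟩⁻¹ := by
      apply Subtype.ext
      simp [MulAut.conjNormal_apply]
    rw [hz, map_mul, map_mul, map_inv, mul_right_comm]
    simp

/-- The conjugation action of `G` on the relation module. -/
noncomputable def actG (π : FreeGroup X →* G) (hπ : Function.Surjective π) :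
    G →* MulAut (Abelianization ↥π.ker) :=
  (π.liftOfRightInverse (Function.surjInv hπ) (Function.rightInverse_surjInv hπ))
    ⟨actF π, ker_le_ker_actF π⟩

/-- The relation module `R̄ = R/[R,R]` as a `G`-representation over `ℤ`. -/
noncomputable def relRep (π : FreeGroup X →* G) (hπ : Function.Surjective π) :
    Representation ℤ G (Additive (Abelianization ↥π.ker)) where
  toFun g := ((MonoidHom.toAdditive (actG π hπ g).toMonoidHom)).toIntLinearMap
  map_one' := by
    ext x
    show (MonoidHom.toAdditive (MulEquiv.toMonoidHom ((actG π hπ) 1))).toIntLinearMap x = x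
    rw [map_one]
    rfl
  map_mul' g₁ g₂ := by
    ext x
    show (MonoidHom.toAdditive (MulEquiv.toMonoidHom ((actG π hπ) (g₁ * g₂)))).toIntLinearMap x
        = (MonoidHom.toAdditive (MulEquiv.toMonoidHom ((actG π hπ) g₁))).toIntLinearMap
            ((MonoidHom.toAdditive (MulEquiv.toMonoidHom ((actG π hπ) g₂))).toIntLinearMap x)
    rw [map_mul]
    rfl

namespace MonoidAlgebra

variable (k G : Type*) [CommRing k] [Group G]

noncomputable def augmentation : MonoidAlgebra k G →ₐ[k] k := lift k k G 1

variable {k G}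

lemma augmentation_of (g : G) : augmentation k G (of k G g) = 1 := by
  simp [augmentation]

lemma sub_augmentation_smul_one_mem_span (a : MonoidAlgebra k G) :
    a - augmentation k G a • 1 ∈ Submodule.span k (Set.range fun g : G => of k G g - 1) := by
  induction a using MonoidAlgebra.induction_on with
  | of g =>
    rw [augmentation_of, one_smul]
    exact Submodule.subset_span ⟨g, rfl⟩
  | add a b ha hb =>
    rw [map_add, add_smul, add_sub_add_comm]
    exact add_mem ha hb
  | smul c a ha =>
    rw [map_smul, smul_assoc, ← smul_sub]
    exact Submodule.smul_mem _ c ha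

lemma span_of_sub_one_le_ker_augmentation (g : G) :
    Ideal.span {of k G g - 1} ≤ RingHom.ker (augmentation k G) := by
  rw [Ideal.span_le, Set.singleton_subset_iff, SetLike.mem_coe, RingHom.mem_ker, map_sub,
    augmentation_of, map_one, sub_self]

end MonoidAlgebra

open MonoidAlgebra

section Coinvariants

variable (k G : Type*) [CommRing k] [Group G]
variable (M : Type*) [AddCommGroup M] [Module (MonoidAlgebra k G) M]

noncomputable def coinvariantsKer : Submodule (MonoidAlgebra k G) M :=
  Submodule.span _ {m | ∃ (g : G) (x : M), of k G g • x - x = m}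

variable {k G M} {N : Type*} [AddCommGroup N] [Module (MonoidAlgebra k G) N]

lemma map_coinvariantsKer_le (f : M →ₗ[MonoidAlgebra k G] N) :
    (coinvariantsKer k G M).map f ≤ coinvariantsKer k G N := by
  rw [coinvariantsKer, Submodule.map_span_le]
  rintro _ ⟨g, x, rfl⟩
  exact Submodule.subset_span ⟨g, f x, by rw [map_sub, map_smul]⟩

variable [Module k M] [IsScalarTower k (MonoidAlgebra k G) M]
variable {V : Type*} [AddCommGroup V] [Module k V]

lemma map_smul_eq_augmentation_smul {f : M →ₗ[k] V}
    (hf : ∀ (g : G) (x : M), f (of k G g • x) = f x) (a : MonoidAlgebra k G) (x : M) :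
    f (a • x) = augmentation k G a • f x := by
  induction a using MonoidAlgebra.induction_on with
  | of g => rw [hf, augmentation_of, one_smul]
  | add a b ha hb => rw [add_smul, map_add, ha, hb, map_add, add_smul]
  | smul c a ha => rw [smul_assoc, map_smul, ha, map_smul, smul_assoc]

lemma restrictScalars_coinvariantsKer_le_ker {f : M →ₗ[k] V}
    (hf : ∀ (g : G) (x : M), f (of k G g • x) = f x) :
    (coinvariantsKer k G M).restrictScalars k ≤ LinearMap.ker f := by
  intro x hx
  induction hx using Submodule.span_induction with
  | mem _ h =>
    obtain ⟨g, y, rfl⟩ := h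
    rw [LinearMap.mem_ker, map_sub, hf, sub_self]
  | zero => exact zero_mem _
  | add _ _ _ _ hx hy => exact add_mem hx hy
  | smul a _ _ hx =>
    rw [LinearMap.mem_ker, map_smul_eq_augmentation_smul hf, LinearMap.mem_ker.mp hx, smul_zero]

variable (G) in
structure IsCoinvariantsMap (f : M →ₗ[k] V) : Prop where
  map_of_smul : ∀ (g : G) (x : M), f (of k G g • x) = f x
  surjective : Function.Surjective f
  ker_le : LinearMap.ker f ≤ (coinvariantsKer k G M).restrictScalars k

namespace IsCoinvariantsMap

variable {f : M →ₗ[k] V}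

lemma ker_eq (hf : IsCoinvariantsMap G f) :
    LinearMap.ker f = (coinvariantsKer k G M).restrictScalars k :=
  le_antisymm hf.ker_le (restrictScalars_coinvariantsKer_le_ker hf.map_of_smul)

noncomputable def quotientEquiv (hf : IsCoinvariantsMap G f) :
    (M ⧸ coinvariantsKer k G M) ≃ₗ[k] V :=
  (Submodule.Quotient.restrictScalarsEquiv k _).symm ≪≫ₗ
    Submodule.quotEquivOfEq _ _ hf.ker_eq.symm ≪≫ₗ f.quotKerEquivOfSurjective hf.surjective

variable [Module k N] [IsScalarTower k (MonoidAlgebra k G) N]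

lemma comp_linearEquiv {f : N →ₗ[k] V} (hf : IsCoinvariantsMap G f)
    (e : M ≃ₗ[MonoidAlgebra k G] N) :
    IsCoinvariantsMap G (f ∘ₗ (e : M →ₗ[MonoidAlgebra k G] N).restrictScalars k) where
  map_of_smul g x := by
    simp only [LinearMap.coe_comp, Function.comp_apply, LinearMap.coe_restrictScalars,
      LinearEquiv.coe_coe, map_smul, hf.map_of_smul]
  surjective := hf.surjective.comp e.surjective
  ker_le x hx := by
    rw [← e.symm_apply_apply x]
    exact map_coinvariantsKer_le e.symm.toLinearMap ⟨e x, hf.ker_le hx, rfl⟩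

end IsCoinvariantsMap

end Coinvariants

namespace IsCoinvariantsMap

variable {k G : Type*} [CommRing k] [Group G] {ι : Type*}
variable {M : ι → Type*} [∀ i, AddCommGroup (M i)] [∀ i, Module (MonoidAlgebra k G) (M i)]
  [∀ i, Module k (M i)] [∀ i, IsScalarTower k (MonoidAlgebra k G) (M i)]
variable {V : ι → Type*} [∀ i, AddCommGroup (V i)] [∀ i, Module k (V i)]

lemma lmap {f : ∀ i, M i →ₗ[k] V i} (hf : ∀ i, IsCoinvariantsMap G (f i)) :
    IsCoinvariantsMap G (DirectSum.lmap f) where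
  map_of_smul g x := by
    ext i
    rw [DirectSum.lmap_apply, DirectSum.lmap_apply, DirectSum.smul_apply, (hf i).map_of_smul]
  surjective := (DirectSum.lmap_surjective f).mpr fun i => (hf i).surjective
  ker_le x hx := by
    classical
    rw [← DirectSum.sum_support_of x]
    refine sum_mem fun i _ => ?_
    have hxi : x i ∈ LinearMap.ker (f i) := by
      rw [LinearMap.mem_ker, ← DirectSum.lmap_apply f, LinearMap.mem_ker.mp hx,
        DirectSum.zero_apply]
    exact map_coinvariantsKer_le (DirectSum.lof (MonoidAlgebra k G) ι M i)
      ⟨x i, (hf i).ker_le hxi, rfl⟩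

end IsCoinvariantsMap

section Cyclic

variable {k G : Type*} [CommRing k] [Group G] {J : Ideal (MonoidAlgebra k G)}

/-- For the noncommutative ring `k[G]`, `Ideal` means left ideal and `k[G] ⧸ J` is only a
`k[G]`-module, so the augmentation descends to it as a `k`-linear map. -/
noncomputable def augmentationQuotient (hJ : J ≤ RingHom.ker (augmentation k G)) :
    (MonoidAlgebra k G ⧸ J) →ₗ[k] k :=
  (J.restrictScalars k).liftQ (augmentation k G).toLinearMap hJ ∘ₗ
    (Submodule.Quotient.restrictScalarsEquiv k J).symm.toLinearMap

lemma augmentationQuotient_mk (hJ : J ≤ RingHom.ker (augmentation k G))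
    (a : MonoidAlgebra k G) :
    augmentationQuotient hJ (Submodule.Quotient.mk a) = augmentation k G a :=
  rfl

lemma isCoinvariantsMap_augmentationQuotient (hJ : J ≤ RingHom.ker (augmentation k G)) :
    IsCoinvariantsMap G (augmentationQuotient hJ) where
  map_of_smul g x := by
    obtain ⟨a, rfl⟩ := Submodule.Quotient.mk_surjective _ x
    rw [← Submodule.Quotient.mk_smul, augmentationQuotient_mk, augmentationQuotient_mk,
      smul_eq_mul, map_mul, augmentation_of, one_mul]
  surjective c := ⟨Submodule.Quotient.mk (c • 1), by
    rw [augmentationQuotient_mk, map_smul, map_one, smul_eq_mul, mul_one]⟩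
  ker_le x hx := by
    obtain ⟨a, rfl⟩ := Submodule.Quotient.mk_surjective _ x
    rw [LinearMap.mem_ker, augmentationQuotient_mk] at hx
    have hspan : Submodule.span k (Set.range fun g : G => of k G g - 1) ≤
        ((coinvariantsKer k G _).restrictScalars k).comap (J.mkQ.restrictScalars k) := by
      rw [Submodule.span_le]
      rintro _ ⟨g, rfl⟩
      refine Submodule.subset_span ⟨g, Submodule.Quotient.mk 1, ?_⟩
      rw [← Submodule.Quotient.mk_smul, smul_eq_mul, mul_one, ← Submodule.Quotient.mk_sub]
      rfl
    simpa [hx] using hspan (sub_augmentation_smul_one_mem_span a)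

end Cyclic


namespace RelationModule

variable (π : FreeGroup X →* G) (hπ : Function.Surjective π)

def mk (r : π.ker) : (relRep π hπ).asModule := Additive.ofMul (Abelianization.of r)

variable {π hπ}

lemma mk_mul (r s : π.ker) : mk π hπ (r * s) = mk π hπ r + mk π hπ s :=
  congrArg Additive.ofMul (map_mul _ r s)

lemma mk_inv (r : π.ker) : mk π hπ r⁻¹ = -mk π hπ r :=
  congrArg Additive.ofMul (map_inv _ r)

lemma mk_surjective : Function.Surjective (mk π hπ) :=
  fun m => QuotientGroup.mk_surjective (Additive.toMul m)

lemma of_smul_mk (f : FreeGroup X) (r : π.ker) :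
    MonoidAlgebra.of ℤ G (π f) • mk π hπ r = mk π hπ (MulAut.conjNormal f r) := by
  refine ((relRep π hπ).asModuleEquiv_symm_map_rho (π f) (mk π hπ r)).symm.trans ?_
  show Additive.ofMul (actG π hπ (π f) (Abelianization.of r)) = _
  rw [actG, MonoidHom.liftOfRightInverse_comp_apply]
  exact congrArg Additive.ofMul (abelianizationCongr_of _ r)

lemma mk_conj_eq_mk {r : FreeGroup X} (hr : r ∈ π.ker) (f : FreeGroup X) :
    (QuotientGroup.mk (f * r * f⁻¹) : FreeGroup X ⧸ relComm π) = QuotientGroup.mk r := by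
  rw [eq_comm, QuotientGroup.eq, show r⁻¹ * (f * r * f⁻¹) = ⁅r⁻¹, f⁆ by group]
  exact Subgroup.commutator_mem_commutator (inv_mem hr) (Subgroup.mem_top f)

variable (π hπ) in
def coinvariantsKerPreimage : Subgroup π.ker where
  carrier := {r | mk π hπ r ∈ coinvariantsKer ℤ G (relRep π hπ).asModule}
  mul_mem' {r s} hr hs := by
    rw [Set.mem_ofPred_eq, mk_mul]
    exact add_mem hr hs
  one_mem' := by
    rw [Set.mem_ofPred_eq, show mk π hπ 1 = 0 from congrArg Additive.ofMul (map_one _)]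
    exact zero_mem _
  inv_mem' {r} hr := by
    rw [Set.mem_ofPred_eq, mk_inv]
    exact neg_mem hr

lemma mem_coinvariantsKerPreimage {r : π.ker} :
    r ∈ coinvariantsKerPreimage π hπ ↔
      mk π hπ r ∈ coinvariantsKer ℤ G (relRep π hπ).asModule :=
  Iff.rfl

lemma relComm_le_map_coinvariantsKerPreimage :
    relComm π ≤ (coinvariantsKerPreimage π hπ).map π.ker.subtype := by
  rw [relComm, Subgroup.commutator_le]
  intro r hr f _
  -- `⁅r, f⁆ = r · (f r⁻¹ f⁻¹)`, whose class in `R̄` is `r̄ - π(f)·r̄`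
  refine ⟨⟨r, hr⟩ * MulAut.conjNormal f ⟨r, hr⟩⁻¹, ?_, ?_⟩
  · rw [SetLike.mem_coe, mem_coinvariantsKerPreimage, mk_mul, ← of_smul_mk, mk_inv, smul_neg,
      ← sub_eq_add_neg, ← neg_sub]
    exact neg_mem (Submodule.subset_span ⟨π f, mk π hπ ⟨r, hr⟩, rfl⟩)
  · simp [MulAut.conjNormal_apply, commutatorElement_def, mul_assoc]

lemma mk_mem_coinvariantsKer {r : π.ker} (hr : (r : FreeGroup X) ∈ relComm π) :
    mk π hπ r ∈ coinvariantsKer ℤ G (relRep π hπ).asModule := by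
  obtain ⟨s, hs, hsr⟩ := relComm_le_map_coinvariantsKerPreimage hr
  rwa [← Subtype.ext hsr]

variable (π hπ) in
noncomputable def toRelCoinv : (relRep π hπ).asModule →ₗ[ℤ] Additive (relCoinv π) :=
  (Abelianization.lift
    ((QuotientGroup.mk' (relComm π)).subgroupMap π.ker)).toAdditive.toIntLinearMap

lemma toRelCoinv_mk (r : π.ker) :
    toRelCoinv π hπ (mk π hπ r) =
      Additive.ofMul ((QuotientGroup.mk' (relComm π)).subgroupMap π.ker r) :=
  rfl

lemma isCoinvariantsMap_toRelCoinv : IsCoinvariantsMap G (toRelCoinv π hπ) where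
  map_of_smul g x := by
    obtain ⟨f, rfl⟩ := hπ g
    obtain ⟨r, rfl⟩ := mk_surjective x
    rw [of_smul_mk, toRelCoinv_mk, toRelCoinv_mk]
    congr 1
    exact Subtype.ext (by simpa [MulAut.conjNormal_apply] using mk_conj_eq_mk r.2 f)
  surjective y := by
    obtain ⟨r, hr⟩ :=
      (QuotientGroup.mk' (relComm π)).subgroupMap_surjective π.ker (Additive.toMul y)
    exact ⟨mk π hπ r, by rw [toRelCoinv_mk, hr]; rfl⟩
  ker_le x hx := by
    obtain ⟨r, rfl⟩ := mk_surjective x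
    rw [LinearMap.mem_ker, toRelCoinv_mk] at hx
    refine mk_mem_coinvariantsKer ((QuotientGroup.eq_one_iff _).mp ?_)
    exact congrArg Subtype.val (Additive.ofMul.injective hx)

end RelationModule

theorem free_coinvariants_of_CA_decomposition_general
    (π : FreeGroup X →* G) (hπ : Function.Surjective π)
    -- hypothesis: the relation module decomposes as `⊕ᵢ ℤ[G]/ℤ[G](gᵢ - 1)`
    (I : Type) (g : I → G)
    (hdec : Nonempty ((relRep π hπ).asModule ≃ₗ[MonoidAlgebra ℤ G]
      ⨁ i : I, (MonoidAlgebra ℤ G ⧸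
        Ideal.span {(MonoidAlgebra.of ℤ G (g i) : MonoidAlgebra ℤ G) - 1}))) :
    -- conclusion: `R/[R,F]` is free abelian, in particular torsion-free
    Module.Free ℤ (Additive ↥(relCoinv π)) ∧ (∀ g : ↥(relCoinv π), g ≠ 1 → ¬IsOfFinOrder g) := by
  obtain ⟨e⟩ := hdec
  have hrel := RelationModule.isCoinvariantsMap_toRelCoinv (hπ := hπ)
  have hsum := (IsCoinvariantsMap.lmap fun i => isCoinvariantsMap_augmentationQuotient
    (span_of_sub_one_le_ker_augmentation (g i))).comp_linearEquiv e
  let E : Additive (relCoinv π) ≃ₗ[ℤ] ⨁ _ : I, ℤ :=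
    hrel.quotientEquiv.symm ≪≫ₗ hsum.quotientEquiv
  have hfree : Module.Free ℤ (Additive (relCoinv π)) := Module.Free.of_equiv E.symm
  have : IsAddTorsionFree (Additive (relCoinv π)) :=
    Module.isTorsionFree_int_iff_isAddTorsionFree.mp inferInstance
  refine ⟨hfree, fun x hx => ?_⟩
  rw [← isOfFinAddOrder_ofMul_iff]
  exact not_isOfFinAddOrder_of_isAddTorsionFree (by simpa using hx)

theorem free_coinvariants_of_CA_decomposition
    [Finite X] (π : FreeGroup X →* G) (hπ : Function.Surjective π)
    -- hypothesis: the relation module decomposes as `⊕ᵢ ℤ[G]/ℤ[G](gᵢ - 1)`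
    (I : Type) [DecidableEq I] (g : I → G)
    (hdec : Nonempty ((relRep π hπ).asModule ≃ₗ[MonoidAlgebra ℤ G]
      ⨁ i : I, (MonoidAlgebra ℤ G ⧸
        Ideal.span {(MonoidAlgebra.of ℤ G (g i) : MonoidAlgebra ℤ G) - 1}))) :
    -- conclusion: `R/[R,F]` is free abelian, in particular torsion-free
    Module.Free ℤ (Additive ↥(relCoinv π)) ∧ (∀ g : ↥(relCoinv π), g ≠ 1 → ¬IsOfFinOrder g) :=
  free_coinvariants_of_CA_decomposition_general π hπ I g hdec
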